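/- arXiv:1904.11403 — 2 statements merged into one kernel-verified Lean document; each statement's English description precedes it below -/
import Mathlib

section
/- For any g ∈ L²((0,1)^{n+m}) with positive total variance, and any f ∈ L²((0,1)ⁿ), h ∈ L²((0,1)^{n+m−1}) with g(x,ξ) = G(f(x), h(x_{∼i},ξ)) where G is L-Lipschitz in its first argument uniformly in the second, the total-effect variance of g in x_i is bounded: ∫∫(g(x_i,x_{∼i},ξ) − ∫g(x̃_i,x_{∼i},ξ)dx̃_i)² dx dξ ≤ 2L²(∫f² dx − ∫(∫f dx_i)² dx_{∼i}). -/
open MeasureTheory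

noncomputable section SobolDefs

/-- Uniform probability measure on the open unit cube `(0,1)^n`. -/
def uCube (n : ℕ) : Measure (Fin n → ℝ) :=
  Measure.pi fun _ => volume.restrict (Set.Ioo 0 1)

/-- Mean value of `f`. -/
def mval {α : Type*} [MeasurableSpace α] (μ : Measure α) (f : α → ℝ) : ℝ := ∫ x, f x ∂μ

/-- Integral of the square of `f`. -/
def intSq {α : Type*} [MeasurableSpace α] (μ : Measure α) (f : α → ℝ) : ℝ := ∫ x, (f x) ^ 2 ∂μ

/-- Variance of `f`. -/
def var' {α : Type*} [MeasurableSpace α] (μ : Measure α) (f : α → ℝ) : ℝ := intSq μ f - (mval μ f) ^ 2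

/-- Covariance of `f` and `h`. -/
def cov' {α : Type*} [MeasurableSpace α] (μ : Measure α) (f h : α → ℝ) : ℝ :=
  (∫ x, f x * h x ∂μ) - mval μ f * mval μ h

/-- Conditional mean of `f` obtained by integrating out the coordinate encoded
by the update map `upd` over `(0,1)`. -/
def cMean {α : Type*} [MeasurableSpace α] (upd : α → ℝ → α) (f : α → ℝ) (x : α) : ℝ :=
  ∫ t in Set.Ioo (0 : ℝ) 1, f (upd x t)

/-- Total-effect variance of the coordinate encoded by `upd`. -/
def tVar {α : Type*} [MeasurableSpace α] (μ : Measure α) (upd : α → ℝ → α) (f : α → ℝ) : ℝ :=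
  intSq μ f - ∫ x, (cMean upd f x) ^ 2 ∂μ

/-- Total Sobol sensitivity index of the coordinate encoded by `upd`. -/
def sobolT {α : Type*} [MeasurableSpace α] (μ : Measure α) (upd : α → ℝ → α) (f : α → ℝ) : ℝ :=
  tVar μ upd f / var' μ f

/-- Updating the `i`-th coordinate of a point of the cube. -/
def updC {n : ℕ} (i : Fin n) : (Fin n → ℝ) → ℝ → (Fin n → ℝ) :=
  fun x t => Function.update x i t

/-- Updating the `i`-th coordinate of the first component of a product point. -/
def updF {n : ℕ} {β : Type*} (i : Fin n) : ((Fin n → ℝ) × β) → ℝ → ((Fin n → ℝ) × β) :=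
  fun p t => (Function.update p.1 i t, p.2)

end SobolDefs

/-!
Write `u x t` for `x` with its `i`-th coordinate replaced by `t`, and `c F x = ∫ F (u x t) dt`.
Because resampling preserves the uniform measure and a second resampling overrides the first,
`c F` is orthogonal to `F - c F`, so `∫ (F - c F)² = ∫ F² - ∫ (c F)²`, and the same computation
gives `∫∫ (F x - F (u x t))² = 2 (∫ F² - ∫ (c F)²)`. Since `h` does not depend on `x_i`, the
Lipschitz condition bounds `|g (x, ξ) - g (u x t, ξ)|` by `L |f x - f (u x t)|`; integrating the
square and applying both identities bounds the left-hand side by `L² (∫ f² - ∫ (c f)²)`.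
-/

open MeasureTheory ProbabilityTheory

lemma MeasureTheory.MeasurePreserving.integral_comp_of_aestronglyMeasurable
    {α β : Type*} [MeasurableSpace α] [MeasurableSpace β] {μ : Measure α} {ν : Measure β}
    {T : α → β} (hT : MeasurePreserving T μ ν) {g : β → ℝ} (hg : AEStronglyMeasurable g ν) :
    ∫ x, g (T x) ∂μ = ∫ y, g y ∂ν := by
  rw [← hT.map_eq] at hg ⊢
  exact (integral_map hT.measurable.aemeasurable hg).symm

section Jensen

variable {α β : Type*} [MeasurableSpace α] [MeasurableSpace β] {μ : Measure α} {ρ : Measure β}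
  [IsProbabilityMeasure ρ]

lemma sq_integral_le_integral_sq {X : β → ℝ} (hX : MemLp X 2 ρ) :
    (∫ t, X t ∂ρ) ^ 2 ≤ ∫ t, X t ^ 2 ∂ρ := by
  have := variance_nonneg X ρ
  rw [variance_eq_sub hX] at this
  simpa [sub_nonneg] using this

lemma MeasureTheory.MemLp.integral_prod_left_two [SFinite μ] {Φ : α × β → ℝ}
    (hΦ : MemLp Φ 2 (μ.prod ρ)) : MemLp (fun x => ∫ t, Φ (x, t) ∂ρ) 2 μ := by
  have hmeas : AEStronglyMeasurable (fun x => ∫ t, Φ (x, t) ∂ρ) μ := hΦ.1.integral_prod_right'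
  refine (memLp_two_iff_integrable_sq hmeas).2 <|
    hΦ.integrable_sq.integral_prod_left.mono' (hmeas.pow 2) ?_
  filter_upwards [hΦ.integrable_sq.prod_right_ae, hΦ.1.prodMk_left] with x hx hxm
  rw [Real.norm_eq_abs, abs_sq]
  exact sq_integral_le_integral_sq ((memLp_two_iff_integrable_sq hxm).2 hx)

end Jensen

lemma integral_sub_sq_eq_of_memLp {α : Type*} [MeasurableSpace α] {μ : Measure α}
    {F H : α → ℝ} (hF : MemLp F 2 μ) (hH : MemLp H 2 μ) :
    ∫ x, (F x - H x) ^ 2 ∂μ = ∫ x, F x ^ 2 ∂μ + ∫ x, H x ^ 2 ∂μ - 2 * ∫ x, F x * H x ∂μ := by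
  have hFH : Integrable (fun x => F x * H x) μ := hF.integrable_mul hH
  have hsum : Integrable (fun x => F x ^ 2 + H x ^ 2) μ := hF.integrable_sq.add hH.integrable_sq
  simp only [sub_sq', mul_assoc]
  rw [integral_sub hsum (hFH.const_mul 2),
    integral_add hF.integrable_sq hH.integrable_sq, integral_const_mul]

section Resampling

variable {α β : Type*} [MeasurableSpace α] [MeasurableSpace β] {μ : Measure α} {ρ : Measure β}
  [IsProbabilityMeasure ρ] [SFinite μ] {u : α → β → α} {F : α → ℝ}

lemma memLp_integral_resample
    (hu : MeasurePreserving (fun z : α × β => u z.1 z.2) (μ.prod ρ) μ) (hF : MemLp F 2 μ) :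
    MemLp (fun x => ∫ t, F (u x t) ∂ρ) 2 μ :=
  (hF.comp_measurePreserving hu).integral_prod_left_two

lemma integral_mul_integral_resample
    (hu : MeasurePreserving (fun z : α × β => u z.1 z.2) (μ.prod ρ) μ)
    (hidem : ∀ x s t, u (u x s) t = u x t) (hF : MemLp F 2 μ) :
    ∫ x, F x * ∫ t, F (u x t) ∂ρ ∂μ = ∫ x, (∫ t, F (u x t) ∂ρ) ^ 2 ∂μ := by
  set c : α → ℝ := fun x => ∫ t, F (u x t) ∂ρ
  have hc : MemLp c 2 μ := memLp_integral_resample hu hF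
  have hFc : Integrable (fun x => F x * c x) μ := hF.integrable_mul hc
  have hc_u : ∀ x s, c (u x s) = c x := fun x s => by simp only [c, hidem]
  have hFc_u : Integrable (fun z : α × β => F (u z.1 z.2) * c z.1) (μ.prod ρ) := by
    simpa only [Function.comp_def, hc_u] using (hu.integrable_comp hFc.1).2 hFc
  calc ∫ x, F x * c x ∂μ = ∫ z, F (u z.1 z.2) * c (u z.1 z.2) ∂(μ.prod ρ) :=
        (hu.integral_comp_of_aestronglyMeasurable hFc.1).symm
    _ = ∫ x, (∫ t, F (u x t) ∂ρ) * c x ∂μ := by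
        simp only [hc_u, integral_prod _ hFc_u, integral_mul_const]
    _ = ∫ x, c x ^ 2 ∂μ := by simp only [c, sq]

lemma integral_sq_sub_integral_resample
    (hu : MeasurePreserving (fun z : α × β => u z.1 z.2) (μ.prod ρ) μ)
    (hidem : ∀ x s t, u (u x s) t = u x t) (hF : MemLp F 2 μ) :
    ∫ x, (F x - ∫ t, F (u x t) ∂ρ) ^ 2 ∂μ
      = ∫ x, F x ^ 2 ∂μ - ∫ x, (∫ t, F (u x t) ∂ρ) ^ 2 ∂μ := by
  rw [integral_sub_sq_eq_of_memLp hF (memLp_integral_resample hu hF),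
    integral_mul_integral_resample hu hidem hF]
  ring

lemma integral_prod_sq_sub_resample
    (hu : MeasurePreserving (fun z : α × β => u z.1 z.2) (μ.prod ρ) μ)
    (hidem : ∀ x s t, u (u x s) t = u x t) (hF : MemLp F 2 μ) :
    ∫ z, (F z.1 - F (u z.1 z.2)) ^ 2 ∂(μ.prod ρ)
      = 2 * (∫ x, F x ^ 2 ∂μ - ∫ x, (∫ t, F (u x t) ∂ρ) ^ 2 ∂μ) := by
  have hfst : MeasurePreserving (Prod.fst : α × β → α) (μ.prod ρ) μ := measurePreserving_fst
  have hF₁ : MemLp (fun z : α × β => F z.1) 2 (μ.prod ρ) := hF.comp_measurePreserving hfst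
  have hF₂ : MemLp (fun z : α × β => F (u z.1 z.2)) 2 (μ.prod ρ) := hF.comp_measurePreserving hu
  have hmixed : ∫ z, F z.1 * F (u z.1 z.2) ∂(μ.prod ρ) = ∫ x, (∫ t, F (u x t) ∂ρ) ^ 2 ∂μ := by
    rw [integral_prod _ (hF₁.integrable_mul hF₂ : Integrable (fun z => F z.1 * F (u z.1 z.2)) _),
      ← integral_mul_integral_resample hu hidem hF]
    simp only [integral_const_mul]
  rw [integral_sub_sq_eq_of_memLp hF₁ hF₂, hmixed,
    hfst.integral_comp_of_aestronglyMeasurable (g := fun x => F x ^ 2) hF.integrable_sq.1,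
    hu.integral_comp_of_aestronglyMeasurable (g := fun x => F x ^ 2) hF.integrable_sq.1]
  ring

lemma integral_sq_integral_resample_le
    (hu : MeasurePreserving (fun z : α × β => u z.1 z.2) (μ.prod ρ) μ)
    (hidem : ∀ x s t, u (u x s) t = u x t) (hF : MemLp F 2 μ) :
    ∫ x, (∫ t, F (u x t) ∂ρ) ^ 2 ∂μ ≤ ∫ x, F x ^ 2 ∂μ :=
  sub_nonneg.1 <|
    integral_sq_sub_integral_resample hu hidem hF ▸ integral_nonneg fun _ => sq_nonneg _

lemma integral_sq_sub_integral_resample_le {α' : Type*} [MeasurableSpace α'] {μ' : Measure α'}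
    [SFinite μ'] {v : α' → β → α'} {π : α → α'} {G : α → ℝ} {F : α' → ℝ} {L : ℝ}
    (hu : MeasurePreserving (fun z : α × β => u z.1 z.2) (μ.prod ρ) μ)
    (hidem_u : ∀ x s t, u (u x s) t = u x t)
    (hv : MeasurePreserving (fun z : α' × β => v z.1 z.2) (μ'.prod ρ) μ')
    (hidem_v : ∀ y s t, v (v y s) t = v y t) (hπ : MeasurePreserving π μ μ')
    (hG : MemLp G 2 μ) (hF : MemLp F 2 μ')
    (hlip : ∀ x t, |G x - G (u x t)| ≤ L * |F (π x) - F (v (π x) t)|) :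
    ∫ x, (G x - ∫ t, G (u x t) ∂ρ) ^ 2 ∂μ
      ≤ L ^ 2 * (∫ y, F y ^ 2 ∂μ' - ∫ y, (∫ t, F (v y t) ∂ρ) ^ 2 ∂μ') := by
  have hπρ : MeasurePreserving (fun z : α × β => (π z.1, z.2)) (μ.prod ρ) (μ'.prod ρ) :=
    hπ.prod (.id ρ)
  have hdF : MemLp (fun w : α' × β => F w.1 - F (v w.1 w.2)) 2 (μ'.prod ρ) :=
    (hF.comp_measurePreserving measurePreserving_fst).sub (hF.comp_measurePreserving hv)
  have hsq : ∀ z : α × β,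
      (G z.1 - G (u z.1 z.2)) ^ 2 ≤ L ^ 2 * (F (π z.1) - F (v (π z.1) z.2)) ^ 2 := fun z => by
    simpa only [mul_pow, sq_abs] using pow_le_pow_left₀ (abs_nonneg _) (hlip z.1 z.2) 2
  calc ∫ x, (G x - ∫ t, G (u x t) ∂ρ) ^ 2 ∂μ
      = (∫ z, (G z.1 - G (u z.1 z.2)) ^ 2 ∂(μ.prod ρ)) / 2 := by
        rw [integral_prod_sq_sub_resample hu hidem_u hG,
          integral_sq_sub_integral_resample hu hidem_u hG]
        ring
    _ ≤ (∫ z, L ^ 2 * (F (π z.1) - F (v (π z.1) z.2)) ^ 2 ∂(μ.prod ρ)) / 2 := by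
        refine div_le_div_of_nonneg_right (integral_mono_of_nonneg
          (.of_forall fun z => sq_nonneg _) ?_ (.of_forall hsq)) zero_le_two
        exact ((hπρ.integrable_comp hdF.integrable_sq.1).2 hdF.integrable_sq).const_mul _
    _ = L ^ 2 * (∫ y, F y ^ 2 ∂μ' - ∫ y, (∫ t, F (v y t) ∂ρ) ^ 2 ∂μ') := by
        rw [integral_const_mul, hπρ.integral_comp_of_aestronglyMeasurable
          (g := fun w => (F w.1 - F (v w.1 w.2)) ^ 2) hdF.integrable_sq.1,
          integral_prod_sq_sub_resample hv hidem_v hF]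
        ring

end Resampling

lemma MeasureTheory.measurePreserving_update_pi {ι : Type*} [Fintype ι] [DecidableEq ι]
    {X : ι → Type*} [∀ j, MeasurableSpace (X j)] (μ : ∀ j, Measure (X j))
    [∀ j, SigmaFinite (μ j)] (i : ι) [IsProbabilityMeasure (μ i)] :
    MeasurePreserving (fun z : (∀ j, X j) × X i => Function.update z.1 i z.2)
      ((Measure.pi μ).prod (μ i)) (Measure.pi μ) := by
  refine ⟨measurable_update', (Measure.pi_eq fun s hs => ?_).symm⟩
  have hpre : (fun z : (∀ j, X j) × X i => Function.update z.1 i z.2) ⁻¹' Set.univ.pi s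
      = Set.univ.pi (Function.update s i Set.univ) ×ˢ s i := by
    ext ⟨x, t⟩
    simp only [Set.mem_preimage, Set.mem_univ_pi, Set.mem_prod]
    refine ⟨fun h => ⟨fun j => ?_, by simpa using h i⟩, fun h j => ?_⟩
    · rcases eq_or_ne j i with rfl | hj
      · simp
      · simpa [hj] using h j
    · rcases eq_or_ne j i with rfl | hj
      · simpa using h.2
      · simpa [hj] using h.1 j
  rw [Measure.map_apply measurable_update' (MeasurableSet.univ_pi hs), hpre, Measure.prod_prod,
    Measure.pi_pi, ← Finset.mul_prod_erase _ _ (Finset.mem_univ i),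
    ← Finset.mul_prod_erase _ (fun j => μ j (s j)) (Finset.mem_univ i)]
  simp only [Function.update_self, measure_univ, one_mul]
  rw [mul_comm]
  congr 1
  exact Finset.prod_congr rfl fun j hj => by rw [Function.update_of_ne (Finset.ne_of_mem_erase hj)]

lemma MeasureTheory.MeasurePreserving.resample_fst {α β γ : Type*} [MeasurableSpace α]
    [MeasurableSpace β] [MeasurableSpace γ] {μ : Measure α} {ρ : Measure β} [SFinite μ]
    [SFinite ρ] {u : α → β → α} (hu : MeasurePreserving (fun z : α × β => u z.1 z.2) (μ.prod ρ) μ)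
    (ν : Measure γ) [SFinite ν] :
    MeasurePreserving (fun z : (α × γ) × β => (u z.1.1 z.2, z.1.2)) ((μ.prod ν).prod ρ)
      (μ.prod ν) := by
  have hassoc := measurePreserving_prodAssoc μ ν ρ
  have hswap := (MeasurePreserving.id μ).prod (Measure.measurePreserving_swap (μ := ν) (ν := ρ))
  have hassoc' := (measurePreserving_prodAssoc μ ρ ν).symm
  exact (hu.prod (MeasurePreserving.id ν)).comp (hassoc'.comp (hswap.comp hassoc))

instance : IsProbabilityMeasure (volume.restrict (Set.Ioo (0 : ℝ) 1)) := ⟨by simp⟩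

instance (n : ℕ) : IsProbabilityMeasure (uCube n) := by
  unfold uCube; infer_instance

theorem stmt13_general {n m : ℕ} (i : Fin n) (G : ℝ → ℝ → ℝ) (L : ℝ)
    (hLip : ∀ u u₀ v : ℝ, |G u v - G u₀ v| ≤ L * |u - u₀|)
    (f : (Fin n → ℝ) → ℝ) (h : (Fin n → ℝ) × (Fin m → ℝ) → ℝ)
    (hf : MemLp f 2 (uCube n))
    (hind : ∀ (x : Fin n → ℝ) (t : ℝ) (ξ : Fin m → ℝ),
      h (Function.update x i t, ξ) = h (x, ξ))
    (hg : MemLp (fun p : (Fin n → ℝ) × (Fin m → ℝ) => G (f p.1) (h p)) 2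
      ((uCube n).prod (uCube m))) :
    (∫ p, (G (f p.1) (h p) -
        cMean (updF i) (fun q => G (f q.1) (h q)) p) ^ 2 ∂(uCube n).prod (uCube m)) ≤
      2 * L ^ 2 *
        (intSq (uCube n) f - ∫ x, (cMean (updC i) f x) ^ 2 ∂uCube n) := by
  have hupdC : MeasurePreserving (fun z : (Fin n → ℝ) × ℝ => updC i z.1 z.2)
      ((uCube n).prod (volume.restrict (Set.Ioo 0 1))) (uCube n) :=
    measurePreserving_update_pi _ i
  have hidemC : ∀ x s t, updC i (updC i x s) t = updC i x t := fun x s t =>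
    Function.update_idem ..
  have hidemF : ∀ p s t, updF (β := Fin m → ℝ) i (updF i p s) t = updF i p t := fun p s t =>
    congrArg (·, p.2) (hidemC p.1 s t)
  have hbound := integral_sq_sub_integral_resample_le (hupdC.resample_fst (uCube m)) hidemF
    hupdC hidemC measurePreserving_fst hg hf fun p t => by
      simpa only [updF, updC, hind] using hLip (f p.1) (f (updC i p.1 t)) (h p)
  have hT : 0 ≤ intSq (uCube n) f - ∫ x, (cMean (updC i) f x) ^ 2 ∂uCube n :=
    sub_nonneg.2 (integral_sq_integral_resample_le hupdC hidemC hf)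
  calc _ ≤ L ^ 2 * (intSq (uCube n) f - ∫ x, (cMean (updC i) f x) ^ 2 ∂uCube n) := hbound
    _ ≤ _ := by nlinarith [sq_nonneg L]

/-- Key variance estimate: for `g(x,ξ) = G(f(x), h(x_{∼i},ξ))` with `G`
`L`-Lipschitz in its first argument uniformly in the second,
`∫∫ (g − ∫g dx̃_i)² ≤ 2L²(∫f² − ∫(∫f dx_i)²)`. -/
theorem stmt13 {n m : ℕ} (i : Fin n) (G : ℝ → ℝ → ℝ) (L : ℝ)
    (hLip : ∀ u u₀ v : ℝ, |G u v - G u₀ v| ≤ L * |u - u₀|)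
    (f : (Fin n → ℝ) → ℝ) (h : (Fin n → ℝ) × (Fin m → ℝ) → ℝ)
    (hf : MemLp f 2 (uCube n)) (hh : MemLp h 2 ((uCube n).prod (uCube m)))
    (hind : ∀ (x : Fin n → ℝ) (t : ℝ) (ξ : Fin m → ℝ),
      h (Function.update x i t, ξ) = h (x, ξ))
    (hg : MemLp (fun p : (Fin n → ℝ) × (Fin m → ℝ) => G (f p.1) (h p)) 2
      ((uCube n).prod (uCube m)))
    (hvg : 0 < var' ((uCube n).prod (uCube m)) fun p => G (f p.1) (h p)) :
    (∫ p, (G (f p.1) (h p) -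
        cMean (updF i) (fun q => G (f q.1) (h q)) p) ^ 2 ∂(uCube n).prod (uCube m)) ≤
      2 * L ^ 2 *
        (intSq (uCube n) f - ∫ x, (cMean (updC i) f x) ^ 2 ∂uCube n) :=
  stmt13_general i G L hLip f h hf hind hg
end

section
/- For the function g(x₁,x₂,ξ) = β^{−1/4}·(x₁+x₂+ξ)^{−1/4} on (0,1)³ with β > 0, the total Sobol index S^g_{T,x₂} does not depend on β, and by symmetry S^g_{T,x₁} = S^g_{T,x₂} = S^g_{T,ξ}. Consequently, the single-scale model f(x) = x₁ + βx₂ can have arbitrarily small S^f_{T,x₂} (as β → 0) while S^g_{T,x₂} stays bounded away from 0. -/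
open MeasureTheory

open Set Function

/-!
Multiplying `f` by `c ≠ 0` multiplies both the total-effect variance and the variance by `c²`,
so the index of `g` does not see `β`. A permutation of the coordinates preserves the uniform
measure on the cube and leaves `g` invariant, and it carries the index of one coordinate to that
of another. For positivity: replacing one coordinate of a uniform point by an independent uniform
value preserves the uniform measure, so by Fubini the total-effect variance is the mean, over the
other coordinates, of the variance of the one-dimensional slice `t ↦ g(x₁, t, ξ)`. Each slice is
strictly decreasing, hence not a.e. constant, hence has positive variance; the same argument on
two opposite corners of the cube shows that `g` itself has positive variance.
-/

local notation "ν" => volume.restrict (Ioo (0 : ℝ) 1)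

theorem measurePreserving_update {ι : Type*} [Fintype ι] [DecidableEq ι] {α : ι → Type*}
    [∀ i, MeasurableSpace (α i)] (μ : ∀ i, Measure (α i)) [∀ i, IsProbabilityMeasure (μ i)]
    (i : ι) :
    MeasurePreserving (fun p : (∀ j, α j) × α i => update p.1 i p.2)
      ((Measure.pi μ).prod (μ i)) (Measure.pi μ) := by
  refine ⟨measurable_update', (Measure.pi_eq fun s hs => ?_).symm⟩
  have hpre : (fun p : (∀ j, α j) × α i => update p.1 i p.2) ⁻¹' univ.pi s
      = univ.pi (update s i univ) ×ˢ s i := by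
    ext ⟨x, t⟩
    simp only [mem_preimage, mem_univ_pi, mem_prod]
    constructor
    · intro h
      refine ⟨fun j => ?_, by simpa using h i⟩
      rcases eq_or_ne j i with rfl | hji
      · simp
      · simpa [hji] using h j
    · rintro ⟨hx, ht⟩ j
      rcases eq_or_ne j i with rfl | hji
      · simpa using ht
      · simpa [hji] using hx j
  rw [Measure.map_apply measurable_update' (.univ_pi hs), hpre, Measure.prod_prod,
    Measure.pi_pi, ← Finset.prod_erase_mul _ _ (Finset.mem_univ i), update_self, measure_univ,
    mul_one, ← Finset.prod_erase_mul _ _ (Finset.mem_univ i)]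
  congr 1
  refine Finset.prod_congr rfl fun j hj => ?_
  rw [update_of_ne (Finset.ne_of_mem_erase hj)]

theorem integral_comp_perm_pi {ι α E : Type*} [Fintype ι] [MeasurableSpace α]
    [NormedAddCommGroup E] [NormedSpace ℝ E] (μ : Measure α) [SigmaFinite μ]
    (σ : Equiv.Perm ι) (g : (ι → α) → E) :
    ∫ x, g (x ∘ σ) ∂Measure.pi (fun _ => μ) = ∫ x, g x ∂Measure.pi (fun _ => μ) :=
  (measurePreserving_arrowCongr' (fun _ => μ) (fun _ => μ) σ.symm (.refl α)
    fun _ => .id μ).integral_comp' g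

section Variance

variable {α : Type*} [MeasurableSpace α] {μ : Measure α} [IsProbabilityMeasure μ] {f : α → ℝ}

theorem var'_eq_variance (hf : MemLp f 2 μ) : var' μ f = ProbabilityTheory.variance f μ :=
  (ProbabilityTheory.variance_eq_sub hf).symm

theorem var'_nonneg (hf : MemLp f 2 μ) : 0 ≤ var' μ f :=
  var'_eq_variance hf ▸ ProbabilityTheory.variance_nonneg f μ

theorem var'_pos (hf : MemLp f 2 μ) (hnc : ∀ c, ¬ ∀ᵐ x ∂μ, f x = c) : 0 < var' μ f := by
  refine (var'_nonneg hf).lt_of_ne fun h => hnc (∫ x, f x ∂μ) ?_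
  exact ProbabilityTheory.ae_eq_integral_of_variance_eq_zero hf (var'_eq_variance hf ▸ h.symm)

end Variance

theorem not_ae_eq_const_of_lt {α : Type*} [MeasurableSpace α] {μ : Measure α} {f : α → ℝ}
    {A B : Set α} (hA : μ A ≠ 0) (hB : μ B ≠ 0) (hAB : ∀ x ∈ A, ∀ y ∈ B, f x < f y) (c : ℝ) :
    ¬ ∀ᵐ x ∂μ, f x = c := by
  intro hc
  obtain ⟨x, hxA, hx⟩ := Measure.exists_mem_of_measure_ne_zero_of_ae hA (ae_restrict_of_ae hc)
  obtain ⟨y, hyB, hy⟩ := Measure.exists_mem_of_measure_ne_zero_of_ae hB (ae_restrict_of_ae hc)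
  exact (hAB x hxA y hyB).ne (hx.trans hy.symm)

theorem sobolT_const_mul {α : Type*} [MeasurableSpace α] (μ : Measure α) (upd : α → ℝ → α)
    (f : α → ℝ) {c : ℝ} (hc : c ≠ 0) :
    sobolT μ upd (fun x => c * f x) = sobolT μ upd f := by
  have hcMean : ∀ x, cMean upd (fun y => c * f y) x = c * cMean upd f x := fun x =>
    integral_const_mul c _
  have hintSq : intSq μ (fun x => c * f x) = c ^ 2 * intSq μ f := by
    simp only [intSq, mul_pow, integral_const_mul]
  have hmval : mval μ (fun x => c * f x) = c * mval μ f := integral_const_mul c _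
  have hcMeanSq : ∫ x, cMean upd (fun y => c * f y) x ^ 2 ∂μ =
      c ^ 2 * ∫ x, cMean upd f x ^ 2 ∂μ := by
    simp only [hcMean, mul_pow, integral_const_mul]
  rw [sobolT, sobolT, tVar, tVar, var', var', hintSq, hmval, hcMeanSq, mul_pow, ← mul_sub,
    ← mul_sub, mul_div_mul_left _ _ (pow_ne_zero 2 hc)]

section UnitCube

variable {n : ℕ}

instance : IsProbabilityMeasure ν := ⟨by simp⟩

instance : IsProbabilityMeasure (uCube n) := by unfold uCube; infer_instance

theorem volume_restrict_Ioo_zero_one_Ioo_ne_zero {a b : ℝ} (ha : 0 ≤ a) (hab : a < b)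
    (hb : b ≤ 1) : ν (Ioo a b) ≠ 0 := by
  rw [Measure.restrict_apply measurableSet_Ioo, inter_eq_left.2 (Ioo_subset_Ioo ha hb)]
  simpa using hab

theorem integrable_rpow_volume_restrict_Ioo_zero_one {r : ℝ} (hr : -1 < r) :
    Integrable (fun t : ℝ => t ^ r) ν :=
  (intervalIntegral.integrableOn_Ioo_rpow_iff zero_lt_one).2 hr

theorem ae_mem_Ioo_uCube (n : ℕ) : ∀ᵐ x ∂uCube n, ∀ j, x j ∈ Ioo (0 : ℝ) 1 :=
  ae_all_iff.2 fun _ => Measure.tendsto_eval_ae_ae.eventually (ae_restrict_mem measurableSet_Ioo)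

theorem measurePreserving_uCube_update (i : Fin n) :
    MeasurePreserving (fun p : (Fin n → ℝ) × ℝ => updC i p.1 p.2) ((uCube n).prod ν) (uCube n) :=
  measurePreserving_update (fun _ => ν) i

theorem integrable_update_uCube {F : (Fin n → ℝ) → ℝ} (hF : Integrable F (uCube n)) (i : Fin n) :
    Integrable (fun p : (Fin n → ℝ) × ℝ => F (updC i p.1 p.2)) ((uCube n).prod ν) :=
  (measurePreserving_uCube_update i).integrable_comp_of_integrable hF

theorem integral_cMean_uCube {F : (Fin n → ℝ) → ℝ} (hF : Integrable F (uCube n)) (i : Fin n) :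
    ∫ x, cMean (updC i) F x ∂uCube n = ∫ x, F x ∂uCube n := by
  have hU := measurePreserving_uCube_update i
  calc ∫ x, cMean (updC i) F x ∂uCube n
      = ∫ p, F (updC i p.1 p.2) ∂(uCube n).prod ν :=
        (integral_prod _ (integrable_update_uCube hF i)).symm
    _ = ∫ x, F x ∂uCube n := by
      rw [← integral_map hU.measurable.aemeasurable (by rw [hU.map_eq]; exact hF.1), hU.map_eq]

theorem integrable_cMean_uCube {F : (Fin n → ℝ) → ℝ} (hF : Integrable F (uCube n)) (i : Fin n) :
    Integrable (cMean (updC i) F) (uCube n) :=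
  (integrable_update_uCube hF i).integral_prod_left

variable {f : (Fin n → ℝ) → ℝ}

theorem ae_memLp_slice_uCube (hf : Measurable f) (hf2 : Integrable (fun x => f x ^ 2) (uCube n))
    (i : Fin n) : ∀ᵐ x ∂uCube n, MemLp (fun t => f (updC i x t)) 2 ν := by
  filter_upwards [(integrable_update_uCube hf2 i).prod_right_ae] with x hx
  exact (memLp_two_iff_integrable_sq (hf.comp (measurable_update x)).aestronglyMeasurable).2 hx

theorem integrable_cMean_sq_uCube (hf : Measurable f)
    (hf2 : Integrable (fun x => f x ^ 2) (uCube n)) (i : Fin n) :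
    Integrable (fun x => cMean (updC i) f x ^ 2) (uCube n) := by
  have hmeas : StronglyMeasurable (cMean (updC i) f) :=
    (hf.comp (measurable_update' (a := i))).stronglyMeasurable.integral_prod_right'
  refine (integrable_cMean_uCube hf2 i).mono' (hmeas.aestronglyMeasurable.pow 2) ?_
  filter_upwards [ae_memLp_slice_uCube hf hf2 i] with x hx
  rw [Real.norm_of_nonneg (sq_nonneg _)]
  exact sub_nonneg.1 (var'_nonneg hx)

theorem tVar_uCube_eq_integral_var' (hf : Measurable f)
    (hf2 : Integrable (fun x => f x ^ 2) (uCube n)) (i : Fin n) :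
    tVar (uCube n) (updC i) f = ∫ x, var' ν (fun t => f (updC i x t)) ∂uCube n := by
  rw [tVar, intSq, ← integral_cMean_uCube hf2 i,
    ← integral_sub (integrable_cMean_uCube hf2 i) (integrable_cMean_sq_uCube hf hf2 i)]
  rfl

theorem tVar_uCube_pos (hf : Measurable f) (hf2 : Integrable (fun x => f x ^ 2) (uCube n))
    (i : Fin n) (hslice : ∀ᵐ x ∂uCube n, ∀ c, ¬ ∀ᵐ t ∂ν, f (updC i x t) = c) :
    0 < tVar (uCube n) (updC i) f := by
  have hpos : ∀ᵐ x ∂uCube n, 0 < var' ν (fun t => f (updC i x t)) := by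
    filter_upwards [ae_memLp_slice_uCube hf hf2 i, hslice] with x hx hnc
    exact var'_pos hx hnc
  have hint : Integrable (fun x => var' ν (fun t => f (updC i x t))) (uCube n) :=
    (integrable_cMean_uCube hf2 i).sub (integrable_cMean_sq_uCube hf hf2 i)
  rw [tVar_uCube_eq_integral_var' hf hf2 i,
    integral_pos_iff_support_of_nonneg_ae (hpos.mono fun _ hx => hx.le) hint]
  refine pos_iff_ne_zero.2 fun h0 => ?_
  obtain ⟨x, hx0, hx⟩ := ((measure_eq_zero_iff_ae_notMem.1 h0).and hpos).exists
  exact hx0 hx.ne'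

theorem cMean_updC_comp_perm {σ : Equiv.Perm (Fin n)} (hf : ∀ x, f (x ∘ σ) = f x) (i : Fin n)
    (x : Fin n → ℝ) : cMean (updC i) f (x ∘ σ) = cMean (updC (σ i)) f x := by
  refine integral_congr_ae (.of_forall fun t => ?_)
  change f (update (x ∘ σ) i t) = f (update x (σ i) t)
  rw [← hf (update x (σ i) t), update_comp_equiv, Equiv.symm_apply_apply]

theorem sobolT_uCube_updC_perm (σ : Equiv.Perm (Fin n)) (hf : ∀ x, f (x ∘ σ) = f x)
    (i : Fin n) : sobolT (uCube n) (updC (σ i)) f = sobolT (uCube n) (updC i) f := by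
  have h := integral_comp_perm_pi ν σ (fun x => cMean (updC i) f x ^ 2)
  simp only [cMean_updC_comp_perm hf] at h
  unfold sobolT tVar uCube
  rw [h]

end UnitCube

noncomputable def sumRpowNegQuarter (x : Fin 3 → ℝ) : ℝ := (x 0 + x 1 + x 2) ^ (-(1 / 4 : ℝ))

namespace sumRpowNegQuarter

theorem measurable : Measurable sumRpowNegQuarter := by
  unfold sumRpowNegQuarter; fun_prop

theorem comp_perm (σ : Equiv.Perm (Fin 3)) (x : Fin 3 → ℝ) :
    sumRpowNegQuarter (x ∘ σ) = sumRpowNegQuarter x := by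
  rw [sumRpowNegQuarter, sumRpowNegQuarter, ← Fin.sum_univ_three (x ∘ σ), ← Fin.sum_univ_three x]
  exact congrArg (· ^ (-(1 / 4 : ℝ))) (Equiv.sum_comp σ x)

theorem integrable_sq : Integrable (fun x => sumRpowNegQuarter x ^ 2) (uCube 3) := by
  have hdom : Integrable (fun x : Fin 3 → ℝ => x 0 ^ (-(1 / 2 : ℝ))) (uCube 3) :=
    (measurePreserving_eval (fun _ : Fin 3 => ν) 0).integrable_comp_of_integrable
      (integrable_rpow_volume_restrict_Ioo_zero_one (r := -(1 / 2)) (by norm_num))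
  refine hdom.mono' (measurable.pow_const 2).aestronglyMeasurable ?_
  filter_upwards [ae_mem_Ioo_uCube 3] with x hx
  have hs : 0 < x 0 + x 1 + x 2 := by linarith [(hx 0).1, (hx 1).1, (hx 2).1]
  rw [Real.norm_of_nonneg (sq_nonneg _), sumRpowNegQuarter, ← Real.rpow_natCast,
    ← Real.rpow_mul hs.le]
  norm_num
  exact Real.rpow_le_rpow_of_nonpos (hx 0).1 (by linarith [(hx 1).1, (hx 2).1]) (by norm_num)

theorem lt_of_sum_lt {x y : Fin 3 → ℝ} (hx : 0 < x 0 + x 1 + x 2)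
    (hxy : x 0 + x 1 + x 2 < y 0 + y 1 + y 2) : sumRpowNegQuarter y < sumRpowNegQuarter x :=
  Real.rpow_lt_rpow_of_neg hx hxy (by norm_num)

theorem var'_pos : 0 < var' (uCube 3) sumRpowNegQuarter := by
  have hcorner : ∀ {a b : ℝ}, 0 ≤ a → a < b → b ≤ 1 → uCube 3 (univ.pi fun _ => Ioo a b) ≠ 0 :=
    fun ha hab hb => by
      rw [uCube, Measure.pi_pi]
      exact Finset.prod_ne_zero_iff.2 fun _ _ =>
        volume_restrict_Ioo_zero_one_Ioo_ne_zero ha hab hb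
  refine _root_.var'_pos ((memLp_two_iff_integrable_sq measurable.aestronglyMeasurable).2
    integrable_sq) (not_ae_eq_const_of_lt (hcorner (a := 2 / 3) (b := 1) (by norm_num)
    (by norm_num) le_rfl) (hcorner (a := 0) (b := 1 / 3) le_rfl (by norm_num) (by norm_num)) ?_)
  intro x hx y hy
  simp only [mem_univ_pi, mem_Ioo] at hx hy
  exact lt_of_sum_lt (by linarith [hy 0, hy 1, hy 2])
    (by linarith [hx 0, hx 1, hx 2, hy 0, hy 1, hy 2])

theorem ae_not_ae_eq_const_updC_one :
    ∀ᵐ x ∂uCube 3, ∀ c, ¬ ∀ᵐ t ∂ν, sumRpowNegQuarter (updC 1 x t) = c := by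
  filter_upwards [ae_mem_Ioo_uCube 3] with x hx
  refine not_ae_eq_const_of_lt
    (volume_restrict_Ioo_zero_one_Ioo_ne_zero (a := 1 / 2) (b := 1) (by norm_num) (by norm_num)
      le_rfl)
    (volume_restrict_Ioo_zero_one_Ioo_ne_zero (a := 0) (b := 1 / 2) le_rfl (by norm_num)
      (by norm_num))
    fun t ht s hs => lt_of_sum_lt ?_ ?_ <;>
  simp only [updC, ne_eq, Fin.reduceEq, not_false_eq_true, update_of_ne, update_self] <;>
  linarith [(hx 0).1, (hx 2).1, ht.1, hs.1, hs.2]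

theorem sobolT_updC_one_pos : 0 < sobolT (uCube 3) (updC 1) sumRpowNegQuarter :=
  div_pos (tVar_uCube_pos measurable integrable_sq 1 ae_not_ae_eq_const_updC_one) var'_pos

end sumRpowNegQuarter

/-- Counterexample, multiscale part: for
`g(x₁,x₂,ξ) = β^{-1/4}(x₁+x₂+ξ)^{-1/4}` on `(0,1)³`, the total Sobol index of `x₂`
does not depend on `β`, by symmetry all three indices coincide, and the index of
`x₂` stays bounded away from `0` uniformly in `β > 0`. -/
theorem stmt15 :
    (∀ β β' : ℝ, 0 < β → 0 < β' →
      sobolT (uCube 3) (updC 1)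
          (fun x => β ^ (-(1 / 4 : ℝ)) * (x 0 + x 1 + x 2) ^ (-(1 / 4 : ℝ))) =
        sobolT (uCube 3) (updC 1)
          (fun x => β' ^ (-(1 / 4 : ℝ)) * (x 0 + x 1 + x 2) ^ (-(1 / 4 : ℝ)))) ∧
    (∀ β : ℝ, 0 < β →
      sobolT (uCube 3) (updC 0)
          (fun x => β ^ (-(1 / 4 : ℝ)) * (x 0 + x 1 + x 2) ^ (-(1 / 4 : ℝ))) =
        sobolT (uCube 3) (updC 1)
          (fun x => β ^ (-(1 / 4 : ℝ)) * (x 0 + x 1 + x 2) ^ (-(1 / 4 : ℝ))) ∧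
      sobolT (uCube 3) (updC 1)
          (fun x => β ^ (-(1 / 4 : ℝ)) * (x 0 + x 1 + x 2) ^ (-(1 / 4 : ℝ))) =
        sobolT (uCube 3) (updC 2)
          (fun x => β ^ (-(1 / 4 : ℝ)) * (x 0 + x 1 + x 2) ^ (-(1 / 4 : ℝ)))) ∧
    (∃ c : ℝ, 0 < c ∧ ∀ β : ℝ, 0 < β →
      c ≤ sobolT (uCube 3) (updC 1)
        (fun x => β ^ (-(1 / 4 : ℝ)) * (x 0 + x 1 + x 2) ^ (-(1 / 4 : ℝ)))) := by
  have hscale : ∀ β : ℝ, 0 < β → ∀ i : Fin 3,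
      sobolT (uCube 3) (updC i)
          (fun x => β ^ (-(1 / 4 : ℝ)) * (x 0 + x 1 + x 2) ^ (-(1 / 4 : ℝ))) =
        sobolT (uCube 3) (updC i) sumRpowNegQuarter := fun β hβ i =>
    sobolT_const_mul _ _ _ (Real.rpow_pos_of_pos hβ _).ne'
  have hsymm : ∀ (σ : Equiv.Perm (Fin 3)) (i : Fin 3),
      sobolT (uCube 3) (updC (σ i)) sumRpowNegQuarter =
        sobolT (uCube 3) (updC i) sumRpowNegQuarter := fun σ =>
    sobolT_uCube_updC_perm σ (sumRpowNegQuarter.comp_perm σ)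
  refine ⟨fun β β' hβ hβ' => by rw [hscale β hβ, hscale β' hβ'], fun β hβ => ?_,
    ⟨_, sumRpowNegQuarter.sobolT_updC_one_pos, fun β hβ => (hscale β hβ 1).ge⟩⟩
  rw [hscale β hβ, hscale β hβ, hscale β hβ]
  exact ⟨hsymm (Equiv.swap 0 1) 1, hsymm (Equiv.swap 1 2) 2⟩
end
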